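/- arXiv:1601.03279 — 2 statements merged into one kernel-verified Lean document; each statement's English description precedes it below -/
import Mathlib

section
/- For a linear function v on the triangle K with vertices (x_i,y_j), (x_{i+1},y_j), (x_i,y_{j+1}) (where h_x = x_{i+1}-x_i > 0 and h_y = y_{j+1}-y_j > 0), the linear interpolant w^I of a smooth function w (interpolating at the three vertices) satisfies ∫_K (w - w^I) dx dy = w_{xx}(x_i,y_j)·(−h_x³ h_y/24) + w_{xy}(x_i,y_j)·(h_x² h_y²/24) + w_{yy}(x_i,y_j)·(−h_x h_y³/24) + R, where |R| ≤ C·(area of K)·Σ_{l+m=3} h_x^l h_y^m · sup_K |∂_x^l ∂_y^m w| for a constant C independent of w, h_x, h_y. -/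
/-!
Write `w = Q + r`, where `Q` is the second-order Taylor polynomial of `w` at the right-angle vertex
`(xi, yj)`. Interpolation is linear and exact on affine functions, so the interpolation error of `Q`
is an explicit quadratic whose integral over the triangle is the main term. Every point `(x, y)` of
the triangle is reached from `(xi, yj)` by a vertical and then a horizontal segment inside the
triangle; one-variable Taylor bounds along these segments give `|r| ≤ S` on the triangle, with
`S = hx³ M30 + hx² hy M21 + hx hy² M12 + hy³ M03`. Since the interpolant of `r` is a convex
combination of values of `r`, the error of `r` is at most `2 S`, and the triangle has area
`hx hy / 2`; hence the remainder bound holds with `C = 2`.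
-/

open MeasureTheory Set

/-- partial derivative in the first (x) variable -/
noncomputable def pdx (f : ℝ × ℝ → ℝ) : ℝ × ℝ → ℝ := fun p => deriv (fun t => f (t, p.2)) p.1

/-- partial derivative in the second (y) variable -/
noncomputable def pdy (f : ℝ × ℝ → ℝ) : ℝ × ℝ → ℝ := fun p => deriv (fun t => f (p.1, t)) p.2

/-- the closed right triangle with vertices `(xi,yj)`, `(xi+hx,yj)`, `(xi,yj+hy)` -/
def tri (xi yj hx hy : ℝ) : Set (ℝ × ℝ) :=
  {p | xi ≤ p.1 ∧ yj ≤ p.2 ∧ (p.1 - xi) / hx + (p.2 - yj) / hy ≤ 1}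

/-- the affine interpolant of `w` at the vertices of `tri xi yj hx hy`,
written in barycentric coordinates -/
noncomputable def interp (w : ℝ × ℝ → ℝ) (xi yj hx hy : ℝ) : ℝ × ℝ → ℝ :=
  fun p => w (xi, yj) * (1 - (p.1 - xi) / hx - (p.2 - yj) / hy)
    + w (xi + hx, yj) * ((p.1 - xi) / hx) + w (xi, yj + hy) * ((p.2 - yj) / hy)

section PartialDerivatives

variable {f : ℝ × ℝ → ℝ}

theorem hasDerivAt_pdx {p : ℝ × ℝ} (hf : DifferentiableAt ℝ f p) :
    HasDerivAt (fun t => f (t, p.2)) (pdx f p) p.1 :=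
  (hf.comp p.1 (differentiableAt_id.prodMk (differentiableAt_const _))).hasDerivAt

theorem hasDerivAt_pdy {p : ℝ × ℝ} (hf : DifferentiableAt ℝ f p) :
    HasDerivAt (fun t => f (p.1, t)) (pdy f p) p.2 :=
  (hf.comp p.2 ((differentiableAt_const _).prodMk differentiableAt_id)).hasDerivAt

theorem pdx_eq_fderiv (hf : Differentiable ℝ f) : pdx f = fun p => fderiv ℝ f p (1, 0) := by
  funext p
  exact ((hf p).hasFDerivAt.comp_hasDerivAt p.1
    ((hasDerivAt_id p.1).prodMk (hasDerivAt_const _ _))).deriv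

theorem pdy_eq_fderiv (hf : Differentiable ℝ f) : pdy f = fun p => fderiv ℝ f p (0, 1) := by
  funext p
  exact ((hf p).hasFDerivAt.comp_hasDerivAt p.2
    ((hasDerivAt_const _ _).prodMk (hasDerivAt_id p.2))).deriv

theorem contDiff_pdx {n : WithTop ℕ∞} (hf : ContDiff ℝ (n + 1) f) : ContDiff ℝ n (pdx f) := by
  rw [pdx_eq_fderiv (hf.differentiable (by simp))]
  exact (hf.fderiv_right le_rfl).clm_apply contDiff_const

theorem contDiff_pdy {n : WithTop ℕ∞} (hf : ContDiff ℝ (n + 1) f) : ContDiff ℝ n (pdy f) := by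
  rw [pdy_eq_fderiv (hf.differentiable (by simp))]
  exact (hf.fderiv_right le_rfl).clm_apply contDiff_const

end PartialDerivatives

section TaylorRemainder

variable {f f' f'' f''' : ℝ → ℝ} {a b C : ℝ}

theorem abs_sub_le_of_hasDerivAt (hab : a ≤ b) (hf : ∀ t ∈ Icc a b, HasDerivAt f (f' t) t)
    (hC : ∀ t ∈ Icc a b, |f' t| ≤ C) : |f b - f a| ≤ C * (b - a) := by
  simpa [Real.norm_eq_abs, abs_of_nonneg (sub_nonneg.2 hab)] using
    (convex_Icc a b).norm_image_sub_le_of_norm_hasDerivWithin_le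
      (fun t ht => (hf t ht).hasDerivWithinAt) hC (left_mem_Icc.2 hab) (right_mem_Icc.2 hab)

theorem abs_taylor1_remainder_le (hab : a ≤ b) (hf : ∀ t ∈ Icc a b, HasDerivAt f (f' t) t)
    (hf' : ∀ t ∈ Icc a b, HasDerivAt f' (f'' t) t) (hC : ∀ t ∈ Icc a b, |f'' t| ≤ C) :
    |f b - f a - f' a * (b - a)| ≤ C * (b - a) ^ 2 := by
  have hC0 : 0 ≤ C := (abs_nonneg _).trans (hC a (left_mem_Icc.2 hab))
  have hg : ∀ t ∈ Icc a b, HasDerivAt (fun t => f t - f' a * t) (f' t - f' a) t := fun t ht =>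
    (hf t ht).sub (by simpa using (hasDerivAt_id t).const_mul (f' a))
  have hg' : ∀ t ∈ Icc a b, |f' t - f' a| ≤ C * (b - a) := fun t ht => calc
    |f' t - f' a| ≤ C * (t - a) := abs_sub_le_of_hasDerivAt ht.1
      (fun s hs => hf' s (Icc_subset_Icc_right ht.2 hs))
      (fun s hs => hC s (Icc_subset_Icc_right ht.2 hs))
    _ ≤ C * (b - a) := by gcongr; exact ht.2
  calc |f b - f a - f' a * (b - a)| = |(f b - f' a * b) - (f a - f' a * a)| := by ring_nf
    _ ≤ C * (b - a) * (b - a) := abs_sub_le_of_hasDerivAt hab hg hg'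
    _ = C * (b - a) ^ 2 := by ring

theorem abs_taylor2_remainder_le (hab : a ≤ b) (hf : ∀ t ∈ Icc a b, HasDerivAt f (f' t) t)
    (hf' : ∀ t ∈ Icc a b, HasDerivAt f' (f'' t) t) (hf'' : ∀ t ∈ Icc a b, HasDerivAt f'' (f''' t) t)
    (hC : ∀ t ∈ Icc a b, |f''' t| ≤ C) :
    |f b - f a - f' a * (b - a) - f'' a * (b - a) ^ 2 / 2| ≤ C * (b - a) ^ 3 := by
  have hC0 : 0 ≤ C := (abs_nonneg _).trans (hC a (left_mem_Icc.2 hab))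
  have hg : ∀ t ∈ Icc a b, HasDerivAt (fun t => f t - f' a * t - f'' a * (t - a) ^ 2 / 2)
      (f' t - f' a - f'' a * (t - a)) t := fun t ht =>
    (((hf t ht).sub ((hasDerivAt_id' t).const_mul (f' a))).sub
      ((((hasDerivAt_id' t).sub_const a).fun_pow 2).const_mul (f'' a) |>.div_const 2)).congr_deriv
      (by ring)
  have hg' : ∀ t ∈ Icc a b, |f' t - f' a - f'' a * (t - a)| ≤ C * (b - a) ^ 2 := fun t ht => calc
    |f' t - f' a - f'' a * (t - a)| ≤ C * (t - a) ^ 2 := abs_taylor1_remainder_le ht.1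
      (fun s hs => hf' s (Icc_subset_Icc_right ht.2 hs))
      (fun s hs => hf'' s (Icc_subset_Icc_right ht.2 hs))
      (fun s hs => hC s (Icc_subset_Icc_right ht.2 hs))
    _ ≤ C * (b - a) ^ 2 := by gcongr <;> linarith [ht.1, ht.2]
  calc |f b - f a - f' a * (b - a) - f'' a * (b - a) ^ 2 / 2|
      = |(f b - f' a * b - f'' a * (b - a) ^ 2 / 2)
          - (f a - f' a * a - f'' a * (a - a) ^ 2 / 2)| := by ring_nf
    _ ≤ C * (b - a) ^ 2 * (b - a) := abs_sub_le_of_hasDerivAt hab hg hg'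
    _ = C * (b - a) ^ 3 := by ring

end TaylorRemainder

noncomputable def taylor2 (w : ℝ × ℝ → ℝ) (a : ℝ × ℝ) : ℝ × ℝ → ℝ := fun p =>
  w a + pdx w a * (p.1 - a.1) + pdy w a * (p.2 - a.2) + pdx (pdx w) a * (p.1 - a.1) ^ 2 / 2
    + pdy (pdx w) a * ((p.1 - a.1) * (p.2 - a.2)) + pdy (pdy w) a * (p.2 - a.2) ^ 2 / 2

theorem continuous_taylor2 (w : ℝ × ℝ → ℝ) (a : ℝ × ℝ) : Continuous (taylor2 w a) := by
  unfold taylor2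
  fun_prop

theorem abs_sub_taylor2_le {w : ℝ × ℝ → ℝ} {a p : ℝ × ℝ} {M30 M21 M12 M03 : ℝ} (hap : a ≤ p)
    (hw : ContDiff ℝ 3 w)
    (h30 : ∀ q ∈ Icc a p, |pdx (pdx (pdx w)) q| ≤ M30)
    (h21 : ∀ q ∈ Icc a p, |pdy (pdx (pdx w)) q| ≤ M21)
    (h12 : ∀ q ∈ Icc a p, |pdy (pdy (pdx w)) q| ≤ M12)
    (h03 : ∀ q ∈ Icc a p, |pdy (pdy (pdy w)) q| ≤ M03) :
    |w p - taylor2 w a p| ≤ M30 * (p.1 - a.1) ^ 3 + M21 * (p.1 - a.1) ^ 2 * (p.2 - a.2) / 2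
      + M12 * (p.1 - a.1) * (p.2 - a.2) ^ 2 + M03 * (p.2 - a.2) ^ 3 := by
  obtain ⟨x0, y0⟩ := a
  obtain ⟨x, y⟩ := p
  obtain ⟨hx, hy⟩ := Prod.mk_le_mk.1 hap
  have hwx : ContDiff ℝ (1 + 1) (pdx w) := contDiff_pdx (n := 2) hw
  have hwy : ContDiff ℝ (1 + 1) (pdy w) := contDiff_pdy (n := 2) hw
  have d : Differentiable ℝ w := hw.differentiable (by simp)
  have dx : Differentiable ℝ (pdx w) := hwx.differentiable (by simp)
  have dy : Differentiable ℝ (pdy w) := hwy.differentiable (by simp)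
  have dxx : Differentiable ℝ (pdx (pdx w)) := (contDiff_pdx hwx).differentiable (by simp)
  have dyx : Differentiable ℝ (pdy (pdx w)) := (contDiff_pdy hwx).differentiable (by simp)
  have dyy : Differentiable ℝ (pdy (pdy w)) := (contDiff_pdy hwy).differentiable (by simp)
  have hhor : ∀ s ∈ Icc x0 x, (s, y) ∈ Icc (x0, y0) (x, y) := fun s hs =>
    ⟨⟨hs.1, hy⟩, hs.2, le_rfl⟩
  have hver : ∀ t ∈ Icc y0 y, (x0, t) ∈ Icc (x0, y0) (x, y) := fun t ht =>
    ⟨⟨le_rfl, ht.1⟩, hx, ht.2⟩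
  -- Taylor remainders of `w` along the horizontal leg `(x0, y) → (x, y)` (`A`), and of
  -- `w`, `∂ₓw`, `∂ₓ²w` along the vertical leg `(x0, y0) → (x0, y)` (`D`, `B`, `C`).
  set A := w (x, y) - w (x0, y) - pdx w (x0, y) * (x - x0)
    - pdx (pdx w) (x0, y) * (x - x0) ^ 2 / 2
  set B := pdx w (x0, y) - pdx w (x0, y0) - pdy (pdx w) (x0, y0) * (y - y0)
  set C := pdx (pdx w) (x0, y) - pdx (pdx w) (x0, y0)
  set D := w (x0, y) - w (x0, y0) - pdy w (x0, y0) * (y - y0)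
    - pdy (pdy w) (x0, y0) * (y - y0) ^ 2 / 2
  have hA : |A| ≤ M30 * (x - x0) ^ 3 :=
    abs_taylor2_remainder_le (f := fun s => w (s, y)) hx (fun s _ => hasDerivAt_pdx (d (s, y)))
      (fun s _ => hasDerivAt_pdx (dx (s, y))) (fun s _ => hasDerivAt_pdx (dxx (s, y)))
      (fun s hs => h30 _ (hhor s hs))
  have hB : |B| ≤ M12 * (y - y0) ^ 2 :=
    abs_taylor1_remainder_le (f := fun t => pdx w (x0, t)) hy
      (fun t _ => hasDerivAt_pdy (dx (x0, t))) (fun t _ => hasDerivAt_pdy (dyx (x0, t)))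
      (fun t ht => h12 _ (hver t ht))
  have hC : |C| ≤ M21 * (y - y0) :=
    abs_sub_le_of_hasDerivAt (f := fun t => pdx (pdx w) (x0, t)) hy
      (fun t _ => hasDerivAt_pdy (dxx (x0, t))) (fun t ht => h21 _ (hver t ht))
  have hD : |D| ≤ M03 * (y - y0) ^ 3 :=
    abs_taylor2_remainder_le (f := fun t => w (x0, t)) hy (fun t _ => hasDerivAt_pdy (d (x0, t)))
      (fun t _ => hasDerivAt_pdy (dy (x0, t))) (fun t _ => hasDerivAt_pdy (dyy (x0, t)))
      (fun t ht => h03 _ (hver t ht))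
  have hsplit : w (x, y) - taylor2 w (x0, y0) (x, y)
      = A + B * (x - x0) + C * ((x - x0) ^ 2 / 2) + D := by
    simp only [A, B, C, D, taylor2]
    ring
  have hdx2 : (0 : ℝ) ≤ (x - x0) ^ 2 / 2 := by positivity
  calc |w (x, y) - taylor2 w (x0, y0) (x, y)|
      ≤ |A| + |B * (x - x0)| + |C * ((x - x0) ^ 2 / 2)| + |D| :=
        hsplit ▸ (abs_add_le _ _).trans (by gcongr; exact abs_add_three _ _ _)
    _ = |A| + |B| * (x - x0) + |C| * ((x - x0) ^ 2 / 2) + |D| := by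
        rw [abs_mul, abs_mul, abs_of_nonneg (sub_nonneg.2 hx), abs_of_nonneg hdx2]
    _ ≤ M30 * (x - x0) ^ 3 + M12 * (y - y0) ^ 2 * (x - x0) + M21 * (y - y0) * ((x - x0) ^ 2 / 2)
        + M03 * (y - y0) ^ 3 := by gcongr
    _ = _ := by ring

theorem setIntegral_eq_intervalIntegral_of_mem_iff {s : Set (ℝ × ℝ)} {a b : ℝ} {φ ψ : ℝ → ℝ}
    {f : ℝ × ℝ → ℝ} (hs : MeasurableSet s) (hf : IntegrableOn f s) (hab : a ≤ b)
    (hφψ : ∀ x ∈ Icc a b, φ x ≤ ψ x)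
    (hmem : ∀ x y, (x, y) ∈ s ↔ x ∈ Icc a b ∧ y ∈ Icc (φ x) (ψ x)) :
    ∫ p in s, f p = ∫ x in a..b, ∫ y in φ x..ψ x, f (x, y) := by
  classical
  have hslice : ∀ x, ∫ y, s.indicator f (x, y)
      = (Icc a b).indicator (fun x => ∫ y in φ x..ψ x, f (x, y)) x := by
    intro x
    by_cases hx : x ∈ Icc a b
    · have : ∀ y, s.indicator f (x, y) = (Icc (φ x) (ψ x)).indicator (fun y => f (x, y)) y := by
        intro y
        simp only [indicator_apply, hmem, hx, true_and]
      simp only [this, indicator_of_mem hx, integral_indicator measurableSet_Icc,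
        integral_Icc_eq_integral_Ioc, intervalIntegral.integral_of_le (hφψ x hx)]
    · have : ∀ y, s.indicator f (x, y) = 0 := fun y =>
        indicator_of_notMem (fun h => hx ((hmem x y).1 h).1) f
      simp only [this, integral_zero, indicator_of_notMem hx]
  rw [← integral_indicator hs, Measure.volume_eq_prod,
    integral_prod _ ((integrable_indicator_iff hs).2 hf)]
  simp only [hslice, integral_indicator measurableSet_Icc, integral_Icc_eq_integral_Ioc,
    intervalIntegral.integral_of_le hab]

theorem intervalIntegral_eq_of_eq_cubic {f : ℝ → ℝ} {a b d0 d1 d2 d3 : ℝ}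
    (hf : ∀ t, f t = d0 + d1 * (t - a) + d2 * (t - a) ^ 2 + d3 * (t - a) ^ 3) :
    ∫ t in a..b, f t
      = d0 * (b - a) + d1 * (b - a) ^ 2 / 2 + d2 * (b - a) ^ 3 / 3 + d3 * (b - a) ^ 4 / 4 := by
  simp only [hf]
  rw [intervalIntegral.integral_comp_sub_right (fun t => d0 + d1 * t + d2 * t ^ 2 + d3 * t ^ 3)]
  simp (disch := exact (Continuous.intervalIntegrable (by fun_prop) _ _)) only
    [intervalIntegral.integral_add, intervalIntegral.integral_const_mul, integral_pow,
     intervalIntegral.integral_const]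
  rw [intervalIntegral.integral_const_mul, integral_id]
  simp only [smul_eq_mul]
  ring

section Triangle

variable {xi yj hx hy : ℝ}

theorem mem_tri_iff (hx0 : 0 < hx) (hy0 : 0 < hy) (x y : ℝ) :
    (x, y) ∈ tri xi yj hx hy ↔
      x ∈ Icc xi (xi + hx) ∧ y ∈ Icc yj (yj + hy * (1 - (x - xi) / hx)) := by
  have hslant : (x - xi) / hx + (y - yj) / hy ≤ 1 ↔ y ≤ yj + hy * (1 - (x - xi) / hx) := by
    rw [← sub_le_iff_le_add', ← div_le_iff₀' hy0]
    constructor <;> intro h <;> linarith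
  simp only [tri, mem_ofPred_eq, mem_Icc, hslant]
  constructor
  · rintro ⟨h1, h2, h3⟩
    have : 0 ≤ 1 - (x - xi) / hx := (mul_nonneg_iff_of_pos_left hy0).1 (by linarith)
    have : x - xi ≤ hx := (div_le_one hx0).1 (by linarith)
    exact ⟨⟨h1, by linarith⟩, h2, h3⟩
  · rintro ⟨⟨h1, -⟩, h2, h3⟩
    exact ⟨h1, h2, h3⟩

theorem isClosed_tri (xi yj hx hy : ℝ) : IsClosed (tri xi yj hx hy) :=
  (isClosed_le continuous_const continuous_fst).inter <|
    (isClosed_le continuous_const continuous_snd).inter <|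
      isClosed_le (f := fun p : ℝ × ℝ => (p.1 - xi) / hx + (p.2 - yj) / hy) (by fun_prop)
        continuous_const

theorem tri_subset_Icc (hx0 : 0 < hx) (hy0 : 0 < hy) :
    tri xi yj hx hy ⊆ Icc (xi, yj) (xi + hx, yj + hy) := by
  rintro ⟨x, y⟩ hp
  obtain ⟨⟨hx1, hx2⟩, hy1, hy2⟩ := (mem_tri_iff hx0 hy0 x y).1 hp
  have : hy * (1 - (x - xi) / hx) ≤ hy :=
    mul_le_of_le_one_right hy0.le (by linarith [div_nonneg (sub_nonneg.2 hx1) hx0.le])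
  exact ⟨⟨hx1, hy1⟩, hx2, by linarith⟩

theorem isCompact_tri (hx0 : 0 < hx) (hy0 : 0 < hy) : IsCompact (tri xi yj hx hy) :=
  isCompact_Icc.of_isClosed_subset (isClosed_tri _ _ _ _) (tri_subset_Icc hx0 hy0)

theorem Icc_subset_tri (hx0 : 0 < hx) (hy0 : 0 < hy) {p : ℝ × ℝ} (hp : p ∈ tri xi yj hx hy) :
    Icc (xi, yj) p ⊆ tri xi yj hx hy := by
  rintro q ⟨⟨hq1, hq2⟩, hq3, hq4⟩
  refine ⟨hq1, hq2, le_trans ?_ hp.2.2⟩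
  gcongr

theorem vertices_mem_tri (hx0 : 0 < hx) (hy0 : 0 < hy) :
    (xi, yj) ∈ tri xi yj hx hy ∧ (xi + hx, yj) ∈ tri xi yj hx hy ∧
      (xi, yj + hy) ∈ tri xi yj hx hy := by
  simp [tri, hx0.ne', hy0.ne', hx0.le, hy0.le]

theorem integral_tri (hx0 : 0 < hx) (hy0 : 0 < hy) {f : ℝ × ℝ → ℝ} (hf : Continuous f) :
    ∫ p in tri xi yj hx hy, f p
      = ∫ x in xi..(xi + hx), ∫ y in yj..(yj + hy * (1 - (x - xi) / hx)), f (x, y) :=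
  setIntegral_eq_intervalIntegral_of_mem_iff (isClosed_tri _ _ _ _).measurableSet
    (hf.continuousOn.integrableOn_compact (isCompact_tri hx0 hy0)) (by linarith)
    (fun x hx => le_add_of_nonneg_right
      (mul_nonneg hy0.le (sub_nonneg.2 ((div_le_one hx0).2 (by linarith [hx.2])))))
    (mem_tri_iff hx0 hy0)

theorem measureReal_tri (hx0 : 0 < hx) (hy0 : 0 < hy) :
    volume.real (tri xi yj hx hy) = hx * hy / 2 := by
  have hone := integral_tri (xi := xi) (yj := yj) hx0 hy0 continuous_const (f := fun _ => (1 : ℝ))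
  rw [setIntegral_const, smul_eq_mul, mul_one] at hone
  simp only [hone, intervalIntegral.integral_const, smul_eq_mul, mul_one]
  rw [intervalIntegral_eq_of_eq_cubic (d0 := hy) (d1 := -(hy / hx)) (d2 := 0) (d3 := 0)
    (fun x => by ring)]
  field_simp
  ring

end Triangle

theorem abs_sub_taylor2_le_of_mem_tri {w : ℝ × ℝ → ℝ} {xi yj hx hy M30 M21 M12 M03 : ℝ}
    (hx0 : 0 < hx) (hy0 : 0 < hy) (hw : ContDiff ℝ 3 w)
    (h30 : ∀ p ∈ tri xi yj hx hy, |pdx (pdx (pdx w)) p| ≤ M30)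
    (h21 : ∀ p ∈ tri xi yj hx hy, |pdy (pdx (pdx w)) p| ≤ M21)
    (h12 : ∀ p ∈ tri xi yj hx hy, |pdy (pdy (pdx w)) p| ≤ M12)
    (h03 : ∀ p ∈ tri xi yj hx hy, |pdy (pdy (pdy w)) p| ≤ M03) :
    ∀ p ∈ tri xi yj hx hy, |w p - taylor2 w (xi, yj) p|
      ≤ hx ^ 3 * M30 + hx ^ 2 * hy * M21 + hx * hy ^ 2 * M12 + hy ^ 3 * M03 := by
  intro p hp
  have hsub := Icc_subset_tri hx0 hy0 hp
  have hv : (xi, yj) ∈ tri xi yj hx hy := (vertices_mem_tri hx0 hy0).1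
  have hM30 := (abs_nonneg _).trans (h30 _ hv)
  have hM21 := (abs_nonneg _).trans (h21 _ hv)
  have hM12 := (abs_nonneg _).trans (h12 _ hv)
  have hM03 := (abs_nonneg _).trans (h03 _ hv)
  obtain ⟨⟨hx1, hy1⟩, hx2, hy2⟩ := tri_subset_Icc hx0 hy0 hp
  have hdx : 0 ≤ p.1 - xi := sub_nonneg.2 hx1
  have hdy : 0 ≤ p.2 - yj := sub_nonneg.2 hy1
  refine (abs_sub_taylor2_le ⟨hx1, hy1⟩ hw (fun q hq => h30 q (hsub hq))
    (fun q hq => h21 q (hsub hq)) (fun q hq => h12 q (hsub hq))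
    (fun q hq => h03 q (hsub hq))).trans ?_
  have hhalf : M21 * (p.1 - xi) ^ 2 * (p.2 - yj) / 2 ≤ M21 * (p.1 - xi) ^ 2 * (p.2 - yj) :=
    half_le_self (by positivity)
  calc _ ≤ M30 * (p.1 - xi) ^ 3 + M21 * (p.1 - xi) ^ 2 * (p.2 - yj)
        + M12 * (p.1 - xi) * (p.2 - yj) ^ 2 + M03 * (p.2 - yj) ^ 3 := by linarith
    _ ≤ M30 * hx ^ 3 + M21 * hx ^ 2 * hy + M12 * hx * hy ^ 2 + M03 * hy ^ 3 := by
        gcongr <;> linarith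
    _ = _ := by ring

section Interpolation

variable {xi yj hx hy : ℝ}

theorem continuous_interp {f : ℝ × ℝ → ℝ} : Continuous (interp f xi yj hx hy) := by
  unfold interp
  fun_prop

theorem interp_sub (f g : ℝ × ℝ → ℝ) :
    interp (f - g) xi yj hx hy = interp f xi yj hx hy - interp g xi yj hx hy := by
  funext p
  simp only [interp, Pi.sub_apply]
  ring

theorem abs_interp_le (hx0 : 0 < hx) (hy0 : 0 < hy) {f : ℝ × ℝ → ℝ} {S : ℝ}
    (hf : ∀ p ∈ tri xi yj hx hy, |f p| ≤ S) {p : ℝ × ℝ} (hp : p ∈ tri xi yj hx hy) :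
    |interp f xi yj hx hy p| ≤ S := by
  obtain ⟨hv1, hv2, hv3⟩ := vertices_mem_tri hx0 hy0
  obtain ⟨h1, h2, h3⟩ := hp
  unfold interp
  set l2 := (p.1 - xi) / hx
  set l3 := (p.2 - yj) / hy
  have hl2 : 0 ≤ l2 := div_nonneg (sub_nonneg.2 h1) hx0.le
  have hl3 : 0 ≤ l3 := div_nonneg (sub_nonneg.2 h2) hy0.le
  have hl1 : 0 ≤ 1 - l2 - l3 := by linarith
  calc |f (xi, yj) * (1 - l2 - l3) + f (xi + hx, yj) * l2 + f (xi, yj + hy) * l3|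
      ≤ |f (xi, yj)| * (1 - l2 - l3) + |f (xi + hx, yj)| * l2 + |f (xi, yj + hy)| * l3 := by
        refine (abs_add_three _ _ _).trans ?_
        rw [abs_mul, abs_mul, abs_mul, abs_of_nonneg hl1, abs_of_nonneg hl2, abs_of_nonneg hl3]
    _ ≤ S * (1 - l2 - l3) + S * l2 + S * l3 := by gcongr <;> exact hf _ ‹_›
    _ = S := by ring

theorem integral_sub_interp_eq_add (hx0 : 0 < hx) (hy0 : 0 < hy) {f g : ℝ × ℝ → ℝ}
    (hf : Continuous f) (hg : Continuous g) :
    ∫ p in tri xi yj hx hy, (f p - interp f xi yj hx hy p)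
      = (∫ p in tri xi yj hx hy, (g p - interp g xi yj hx hy p))
        + ∫ p in tri xi yj hx hy, ((f - g) p - interp (f - g) xi yj hx hy p) := by
  have hint : ∀ h : ℝ × ℝ → ℝ, Continuous h →
      IntegrableOn (fun p => h p - interp h xi yj hx hy p) (tri xi yj hx hy) := fun h hh =>
    (hh.sub continuous_interp).continuousOn.integrableOn_compact (isCompact_tri hx0 hy0)
  rw [← integral_add (hint g hg) (hint _ (hf.sub hg))]
  congr 1
  funext p
  simp only [interp_sub, Pi.sub_apply]
  ring

theorem abs_integral_sub_interp_le (hx0 : 0 < hx) (hy0 : 0 < hy) {f : ℝ × ℝ → ℝ} {S : ℝ}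
    (hf : ∀ p ∈ tri xi yj hx hy, |f p| ≤ S) :
    |∫ p in tri xi yj hx hy, (f p - interp f xi yj hx hy p)| ≤ 2 * (hx * hy / 2) * S := by
  have hbound : ∀ p ∈ tri xi yj hx hy, ‖f p - interp f xi yj hx hy p‖ ≤ 2 * S := fun p hp => calc
    |f p - interp f xi yj hx hy p| ≤ |f p| + |interp f xi yj hx hy p| := abs_sub _ _
    _ ≤ 2 * S := by linarith [hf p hp, abs_interp_le hx0 hy0 hf hp]
  calc _ ≤ 2 * S * volume.real (tri xi yj hx hy) :=
        norm_setIntegral_le_of_norm_le_const (isCompact_tri hx0 hy0).measure_lt_top hbound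
    _ = 2 * (hx * hy / 2) * S := by rw [measureReal_tri hx0 hy0]; ring

theorem integral_tri_quadratic (hx0 : 0 < hx) (hy0 : 0 < hy) (c20 c11 c02 : ℝ) :
    ∫ p in tri xi yj hx hy, (c20 * ((p.1 - xi) ^ 2 - hx * (p.1 - xi)) / 2
        + c11 * (p.1 - xi) * (p.2 - yj) + c02 * ((p.2 - yj) ^ 2 - hy * (p.2 - yj)) / 2)
      = c20 * (-(hx ^ 3 * hy) / 24) + c11 * (hx ^ 2 * hy ^ 2 / 24)
        + c02 * (-(hx * hy ^ 3) / 24) := by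
  have hinner : ∀ x, ∫ y in yj..(yj + hy * (1 - (x - xi) / hx)),
      (c20 * ((x - xi) ^ 2 - hx * (x - xi)) / 2 + c11 * (x - xi) * (y - yj)
        + c02 * ((y - yj) ^ 2 - hy * (y - yj)) / 2)
      = -(c02 * hy ^ 3 / 12) + (c11 * hy ^ 2 / 2 - c20 * hx * hy / 2) * (x - xi)
        + (c20 * hy - c11 * hy ^ 2 / hx + c02 * hy ^ 3 / (4 * hx ^ 2)) * (x - xi) ^ 2
        + (c11 * hy ^ 2 / (2 * hx ^ 2) - c20 * hy / (2 * hx) - c02 * hy ^ 3 / (6 * hx ^ 3))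
          * (x - xi) ^ 3 := fun x => by
    rw [intervalIntegral_eq_of_eq_cubic (d0 := c20 * ((x - xi) ^ 2 - hx * (x - xi)) / 2)
      (d1 := c11 * (x - xi) - c02 * hy / 2) (d2 := c02 / 2) (d3 := 0) (fun y => by ring)]
    field_simp
    ring
  rw [integral_tri hx0 hy0 (by fun_prop), intervalIntegral_eq_of_eq_cubic hinner]
  field_simp
  ring

theorem taylor2_sub_interp (w : ℝ × ℝ → ℝ) (hx0 : 0 < hx) (hy0 : 0 < hy) (p : ℝ × ℝ) :
    taylor2 w (xi, yj) p - interp (taylor2 w (xi, yj)) xi yj hx hy p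
      = pdx (pdx w) (xi, yj) * ((p.1 - xi) ^ 2 - hx * (p.1 - xi)) / 2
        + pdy (pdx w) (xi, yj) * (p.1 - xi) * (p.2 - yj)
        + pdy (pdy w) (xi, yj) * ((p.2 - yj) ^ 2 - hy * (p.2 - yj)) / 2 := by
  simp only [interp, taylor2]
  field_simp
  ring

end Interpolation

theorem stmt0 :
    ∃ C > 0, ∀ (w : ℝ × ℝ → ℝ) (xi yj hx hy M30 M21 M12 M03 : ℝ),
      0 < hx → 0 < hy → ContDiff ℝ 3 w →
      (∀ p ∈ tri xi yj hx hy, |pdx (pdx (pdx w)) p| ≤ M30) →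
      (∀ p ∈ tri xi yj hx hy, |pdy (pdx (pdx w)) p| ≤ M21) →
      (∀ p ∈ tri xi yj hx hy, |pdy (pdy (pdx w)) p| ≤ M12) →
      (∀ p ∈ tri xi yj hx hy, |pdy (pdy (pdy w)) p| ≤ M03) →
      ∃ R : ℝ,
        (∫ p in tri xi yj hx hy, (w p - interp w xi yj hx hy p)) =
          pdx (pdx w) (xi, yj) * (-(hx ^ 3 * hy) / 24)
          + pdy (pdx w) (xi, yj) * (hx ^ 2 * hy ^ 2 / 24)
          + pdy (pdy w) (xi, yj) * (-(hx * hy ^ 3) / 24) + R ∧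
        |R| ≤ C * (hx * hy / 2) *
          (hx ^ 3 * M30 + hx ^ 2 * hy * M21 + hx * hy ^ 2 * M12 + hy ^ 3 * M03) := by
  refine ⟨2, two_pos, fun w xi yj hx hy M30 M21 M12 M03 hx0 hy0 hw h30 h21 h12 h03 => ?_⟩
  set Q := taylor2 w (xi, yj)
  refine ⟨∫ p in tri xi yj hx hy, ((w - Q) p - interp (w - Q) xi yj hx hy p), ?_, ?_⟩
  · rw [integral_sub_interp_eq_add hx0 hy0 hw.continuous (continuous_taylor2 w _),
      setIntegral_congr_fun (isClosed_tri _ _ _ _).measurableSet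
        (fun p _ => taylor2_sub_interp w hx0 hy0 p), integral_tri_quadratic hx0 hy0]
  · exact abs_integral_sub_interp_le hx0 hy0
      (abs_sub_taylor2_le_of_mem_tri hx0 hy0 hw h30 h21 h12 h03)
end

section
/- Let w ∈ C²([x_i, x_{i+1}] × [y_j, y_{j+1}]) and let w^I be the affine interpolant of w at the three vertices (x_i,y_j), (x_{i+1},y_j), (x_i,y_{j+1}) of the triangle K (with legs h_x, h_y). Then ‖w − w^I‖_{L∞(K)} ≤ C (h_x² ‖w_{xx}‖_{L∞(K)} + h_x h_y ‖w_{xy}‖_{L∞(K)} + h_y² ‖w_{yy}‖_{L∞(K)}) for an absolute constant C. -/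
open Set

/-!
Let `λ₀, λ₁, λ₂ ≥ 0` be the barycentric coordinates of `p ∈ K` with respect to the vertices
`v₀, v₁, v₂`, so that `w^I(p) = ∑ λᵢ w(vᵢ)` and `∑ λᵢ (vᵢ - p) = 0`. Hence
`w(p) - w^I(p) = -∑ λᵢ Rᵢ`, where `Rᵢ = w(vᵢ) - w(p) - Dw(p)(vᵢ - p)` is the first-order Taylor
remainder along the segment `[p, vᵢ] ⊆ K`, bounded by `sup_K |D²w(vᵢ - p, vᵢ - p)|`. The point is
that `vᵢ - p` is controlled componentwise, `|(vᵢ - p).1| ≤ hx` and `|(vᵢ - p).2| ≤ hy`, so expanding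
`D²w` in the coordinate directions gives `|Rᵢ| ≤ hx² M20 + 2 hx hy M11 + hy² M02` with no
dependence on the aspect ratio `hx / hy`.
-/

section Taylor

variable {E F : Type*} [NormedAddCommGroup E] [NormedSpace ℝ E]
  [NormedAddCommGroup F] [NormedSpace ℝ F]

lemma norm_sub_sub_deriv_le {g g' g'' : ℝ → F} {B : ℝ}
    (hg : ∀ t ∈ Icc (0 : ℝ) 1, HasDerivAt g (g' t) t)
    (hg' : ∀ t ∈ Icc (0 : ℝ) 1, HasDerivAt g' (g'' t) t)
    (hB : ∀ t ∈ Icc (0 : ℝ) 1, ‖g'' t‖ ≤ B) :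
    ‖g 1 - g 0 - g' 0‖ ≤ B := by
  have hB0 : 0 ≤ B := (norm_nonneg _).trans (hB 0 (left_mem_Icc.2 zero_le_one))
  have hg'_sub : ∀ t ∈ Icc (0 : ℝ) 1, ‖g' t - g' 0‖ ≤ B := fun t ht => by
    have h := norm_image_sub_le_of_norm_deriv_le_segment'
      (fun s hs => (hg' s hs).hasDerivWithinAt) (fun s hs => hB s (Ico_subset_Icc_self hs)) t ht
    nlinarith [ht.2]
  have h := norm_image_sub_le_of_norm_deriv_le_segment_01' (f := fun t => g t - t • g' 0)
    (fun t ht => ((hg t ht).sub ((hasDerivAt_id t).smul_const (g' 0))).hasDerivWithinAt)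
    (fun t ht => by simpa using hg'_sub t (Ico_subset_Icc_self ht))
  rwa [one_smul, zero_smul, sub_zero, sub_right_comm] at h

lemma hasDerivAt_comp_add_smul {G : Type*} [NormedAddCommGroup G] [NormedSpace ℝ G]
    {g : E → G} {x d : E} {t : ℝ} (hg : DifferentiableAt ℝ g (x + t • d)) :
    HasDerivAt (fun s : ℝ => g (x + s • d)) (fderiv ℝ g (x + t • d) d) t :=
  hg.hasFDerivAt.comp_hasDerivAt t (by simpa using ((hasDerivAt_id t).smul_const d).const_add x)

lemma norm_sub_sub_fderiv_le {f : E → F} (hf : Differentiable ℝ f)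
    (hf' : Differentiable ℝ (fderiv ℝ f)) {S : Set E} (hS : Convex ℝ S) {x y : E}
    (hx : x ∈ S) (hy : y ∈ S) {B : ℝ}
    (hB : ∀ z ∈ S, ‖fderiv ℝ (fderiv ℝ f) z (y - x) (y - x)‖ ≤ B) :
    ‖f y - f x - fderiv ℝ f x (y - x)‖ ≤ B := by
  have h := norm_sub_sub_deriv_le (g := fun t : ℝ => f (x + t • (y - x)))
    (fun t _ => hasDerivAt_comp_add_smul (hf _))
    (fun t _ => (ContinuousLinearMap.apply ℝ F (y - x)).hasFDerivAt.comp_hasDerivAt t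
      (hasDerivAt_comp_add_smul (hf' _)))
    (fun t ht => hB _ (hS.add_smul_sub_mem hx hy ht))
  simpa using h

lemma fderiv_fderiv_apply {f : E → F} {x : E} (hf : DifferentiableAt ℝ (fderiv ℝ f) x)
    (u v : E) : fderiv ℝ (fun y => fderiv ℝ f y v) x u = fderiv ℝ (fderiv ℝ f) x u v := by
  simp [fderiv_clm_apply hf (differentiableAt_const v)]

end Taylor

section Partials

variable {f : ℝ × ℝ → ℝ}

lemma pdx_eq_fderiv_s15 {q : ℝ × ℝ} (hf : DifferentiableAt ℝ f q) : pdx f q = fderiv ℝ f q (1, 0) :=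
  (hf.hasFDerivAt.comp_hasDerivAt q.1 ((hasDerivAt_id q.1).prodMk (hasDerivAt_const q.1 q.2))).deriv

lemma pdy_eq_fderiv_s15 {q : ℝ × ℝ} (hf : DifferentiableAt ℝ f q) : pdy f q = fderiv ℝ f q (0, 1) :=
  (hf.hasFDerivAt.comp_hasDerivAt q.2 ((hasDerivAt_const q.2 q.1).prodMk (hasDerivAt_id q.2))).deriv

lemma pdx_pdx_eq (hf : Differentiable ℝ f) {q : ℝ × ℝ}
    (hf' : DifferentiableAt ℝ (fderiv ℝ f) q) :
    pdx (pdx f) q = fderiv ℝ (fderiv ℝ f) q (1, 0) (1, 0) := by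
  rw [show pdx f = fun y => fderiv ℝ f y (1, 0) from funext fun y => pdx_eq_fderiv_s15 (hf y),
    pdx_eq_fderiv_s15 (hf'.clm_apply (differentiableAt_const _)), fderiv_fderiv_apply hf']

lemma pdy_pdx_eq (hf : Differentiable ℝ f) {q : ℝ × ℝ}
    (hf' : DifferentiableAt ℝ (fderiv ℝ f) q) :
    pdy (pdx f) q = fderiv ℝ (fderiv ℝ f) q (0, 1) (1, 0) := by
  rw [show pdx f = fun y => fderiv ℝ f y (1, 0) from funext fun y => pdx_eq_fderiv_s15 (hf y),
    pdy_eq_fderiv_s15 (hf'.clm_apply (differentiableAt_const _)), fderiv_fderiv_apply hf']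

lemma pdy_pdy_eq (hf : Differentiable ℝ f) {q : ℝ × ℝ}
    (hf' : DifferentiableAt ℝ (fderiv ℝ f) q) :
    pdy (pdy f) q = fderiv ℝ (fderiv ℝ f) q (0, 1) (0, 1) := by
  rw [show pdy f = fun y => fderiv ℝ f y (0, 1) from funext fun y => pdy_eq_fderiv_s15 (hf y),
    pdy_eq_fderiv_s15 (hf'.clm_apply (differentiableAt_const _)), fderiv_fderiv_apply hf']

end Partials

lemma abs_apply_apply_self_le (L : ℝ × ℝ →L[ℝ] ℝ × ℝ →L[ℝ] ℝ)
    (hL : L (1, 0) (0, 1) = L (0, 1) (1, 0)) {a b M20 M11 M02 : ℝ}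
    (h20 : |L (1, 0) (1, 0)| ≤ M20) (h11 : |L (0, 1) (1, 0)| ≤ M11)
    (h02 : |L (0, 1) (0, 1)| ≤ M02) {d : ℝ × ℝ} (h1 : |d.1| ≤ a) (h2 : |d.2| ≤ b) :
    |L d d| ≤ a ^ 2 * M20 + 2 * a * b * M11 + b ^ 2 * M02 := by
  obtain ⟨d1, d2⟩ := d
  dsimp only at h1 h2
  have hexp : L (d1, d2) (d1, d2) = d1 ^ 2 * L (1, 0) (1, 0) + 2 * d1 * d2 * L (0, 1) (1, 0)
      + d2 ^ 2 * L (0, 1) (0, 1) := by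
    have hd : ((d1, d2) : ℝ × ℝ) = d1 • (1, 0) + d2 • (0, 1) := by simp
    rw [hd]
    simp only [map_add, map_smul, add_apply, smul_apply, smul_eq_mul]
    linear_combination d1 * d2 * hL
  have ha : 0 ≤ a := (abs_nonneg _).trans h1
  have hb : 0 ≤ b := (abs_nonneg _).trans h2
  calc |L (d1, d2) (d1, d2)|
      ≤ |d1| ^ 2 * |L (1, 0) (1, 0)| + 2 * |d1| * |d2| * |L (0, 1) (1, 0)|
        + |d2| ^ 2 * |L (0, 1) (0, 1)| := by
        rw [hexp]
        refine (abs_add_three _ _ _).trans_eq ?_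
        simp only [abs_mul, abs_pow, abs_two]
    _ ≤ a ^ 2 * M20 + 2 * a * b * M11 + b ^ 2 * M02 := by
        gcongr

section Triangle

variable {xi yj hx hy : ℝ}

lemma convex_tri (xi yj hx hy : ℝ) : Convex ℝ (tri xi yj hx hy) := by
  intro p ⟨hp1, hp2, hp3⟩ q ⟨hq1, hq2, hq3⟩ a b ha hb hab
  obtain rfl : b = 1 - a := by linarith
  have hcomb : ((a • p + (1 - a) • q).1 - xi) / hx + ((a • p + (1 - a) • q).2 - yj) / hy
      = a * ((p.1 - xi) / hx + (p.2 - yj) / hy)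
        + (1 - a) * ((q.1 - xi) / hx + (q.2 - yj) / hy) := by
    simp only [Prod.fst_add, Prod.snd_add, Prod.smul_fst, Prod.smul_snd, smul_eq_mul]
    ring
  refine ⟨?_, ?_, ?_⟩
  · simp only [Prod.fst_add, Prod.smul_fst, smul_eq_mul]
    linarith [mul_le_mul_of_nonneg_left hp1 ha, mul_le_mul_of_nonneg_left hq1 hb]
  · simp only [Prod.snd_add, Prod.smul_snd, smul_eq_mul]
    linarith [mul_le_mul_of_nonneg_left hp2 ha, mul_le_mul_of_nonneg_left hq2 hb]
  · show _ / hx + _ / hy ≤ 1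
    rw [hcomb]
    linarith [mul_le_mul_of_nonneg_left hp3 ha, mul_le_mul_of_nonneg_left hq3 hb]

lemma mk_mem_tri : (xi, yj) ∈ tri xi yj hx hy := by
  simp [tri]

lemma mk_add_fst_mem_tri (hhx : 0 < hx) : (xi + hx, yj) ∈ tri xi yj hx hy := by
  simp [tri, hhx.le, hhx.ne']

lemma mk_add_snd_mem_tri (hhy : 0 < hy) : (xi, yj + hy) ∈ tri xi yj hx hy := by
  simp [tri, hhy.le, hhy.ne']

lemma fst_sub_le_of_mem_tri (hhx : 0 < hx) (hhy : 0 < hy) {p : ℝ × ℝ}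
    (hp : p ∈ tri xi yj hx hy) : p.1 - xi ≤ hx := by
  obtain ⟨-, hp2, hp3⟩ := hp
  have h : (p.1 - xi) / hx ≤ 1 := by linarith [div_nonneg (sub_nonneg.2 hp2) hhy.le]
  rwa [div_le_one hhx] at h

lemma snd_sub_le_of_mem_tri (hhx : 0 < hx) (hhy : 0 < hy) {p : ℝ × ℝ}
    (hp : p ∈ tri xi yj hx hy) : p.2 - yj ≤ hy := by
  obtain ⟨hp1, -, hp3⟩ := hp
  have h : (p.2 - yj) / hy ≤ 1 := by linarith [div_nonneg (sub_nonneg.2 hp1) hhx.le]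
  rwa [div_le_one hhy] at h

lemma abs_fst_sub_le_of_mem_tri (hhx : 0 < hx) (hhy : 0 < hy) {p q : ℝ × ℝ}
    (hp : p ∈ tri xi yj hx hy) (hq : q ∈ tri xi yj hx hy) : |q.1 - p.1| ≤ hx :=
  abs_sub_le_iff.2 ⟨by linarith [fst_sub_le_of_mem_tri hhx hhy hq, hp.1],
    by linarith [fst_sub_le_of_mem_tri hhx hhy hp, hq.1]⟩

lemma abs_snd_sub_le_of_mem_tri (hhx : 0 < hx) (hhy : 0 < hy) {p q : ℝ × ℝ}
    (hp : p ∈ tri xi yj hx hy) (hq : q ∈ tri xi yj hx hy) : |q.2 - p.2| ≤ hy :=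
  abs_sub_le_iff.2 ⟨by linarith [snd_sub_le_of_mem_tri hhx hhy hq, hp.2.1],
    by linarith [snd_sub_le_of_mem_tri hhx hhy hp, hq.2.1]⟩

lemma abs_sub_interp_le {w : ℝ × ℝ → ℝ} (hhx : 0 < hx) (hhy : 0 < hy) {p : ℝ × ℝ}
    (hp : p ∈ tri xi yj hx hy) (L : ℝ × ℝ →L[ℝ] ℝ) {B : ℝ}
    (hB : ∀ v ∈ tri xi yj hx hy, |w v - w p - L (v - p)| ≤ B) :
    |w p - interp w xi yj hx hy p| ≤ B := by
  obtain ⟨hp1, hp2, hst⟩ := hp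
  set s := (p.1 - xi) / hx
  set t := (p.2 - yj) / hy
  have hs : 0 ≤ s := div_nonneg (sub_nonneg.2 hp1) hhx.le
  have ht : 0 ≤ t := div_nonneg (sub_nonneg.2 hp2) hhy.le
  have hL : ∀ v : ℝ × ℝ, L (v - p) = (v.1 - p.1) * L (1, 0) + (v.2 - p.2) * L (0, 1) := by
    intro v
    rw [show v - p = (v.1 - p.1) • ((1 : ℝ), (0 : ℝ)) + (v.2 - p.2) • ((0 : ℝ), (1 : ℝ)) by
      ext <;> simp, map_add, map_smul, map_smul, smul_eq_mul, smul_eq_mul]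
  have hsx : s * hx = p.1 - xi := div_mul_cancel₀ _ hhx.ne'
  have hty : t * hy = p.2 - yj := div_mul_cancel₀ _ hhy.ne'
  -- the barycentric coordinates reproduce `p`, so the linear part of the remainders cancels
  have herr : w p - interp w xi yj hx hy p
      = -((1 - s - t) * (w (xi, yj) - w p - L ((xi, yj) - p))
        + s * (w (xi + hx, yj) - w p - L ((xi + hx, yj) - p))
        + t * (w (xi, yj + hy) - w p - L ((xi, yj + hy) - p))) := by
    simp only [interp, hL]
    linear_combination -L (1, 0) * hsx - L (0, 1) * hty
  have hr : 0 ≤ 1 - s - t := by linarith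
  have h0 := hB _ mk_mem_tri
  have h1 := hB _ (mk_add_fst_mem_tri hhx)
  have h2 := hB _ (mk_add_snd_mem_tri hhy)
  rw [herr, abs_neg]
  calc _ ≤ (1 - s - t) * B + s * B + t * B := by
        refine (abs_add_three _ _ _).trans ?_
        rw [abs_mul, abs_mul, abs_mul, abs_of_nonneg hr, abs_of_nonneg hs, abs_of_nonneg ht]
        exact add_le_add_three (mul_le_mul_of_nonneg_left h0 hr) (mul_le_mul_of_nonneg_left h1 hs)
          (mul_le_mul_of_nonneg_left h2 ht)
    _ = B := by ring

end Triangle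

/-- Anisotropic `L∞` interpolation error estimate on axis-aligned right triangles:
`‖w - w^I‖_{L∞(K)} ≤ C (hx²‖w_xx‖ + hx hy ‖w_xy‖ + hy²‖w_yy‖)` with absolute `C`. -/
theorem stmt15 :
    ∃ C > (0:ℝ), ∀ (w : ℝ × ℝ → ℝ) (xi yj hx hy M20 M11 M02 : ℝ),
      0 < hx → 0 < hy → ContDiff ℝ 2 w →
      (∀ p ∈ tri xi yj hx hy, |pdx (pdx w) p| ≤ M20) →
      (∀ p ∈ tri xi yj hx hy, |pdy (pdx w) p| ≤ M11) →
      (∀ p ∈ tri xi yj hx hy, |pdy (pdy w) p| ≤ M02) →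
      ∀ p ∈ tri xi yj hx hy,
        |w p - interp w xi yj hx hy p|
          ≤ C * (hx ^ 2 * M20 + hx * hy * M11 + hy ^ 2 * M02) := by
  refine ⟨2, two_pos, fun w xi yj hx hy M20 M11 M02 hhx hhy hw h20 h11 h02 p hp => ?_⟩
  have hw1 : Differentiable ℝ w := hw.differentiable (by norm_num)
  have hw2 : Differentiable ℝ (fderiv ℝ w) :=
    (hw.fderiv_right (m := 1) (by norm_num)).differentiable one_ne_zero
  have hHess : ∀ q ∈ tri xi yj hx hy, ∀ v ∈ tri xi yj hx hy,
      |fderiv ℝ (fderiv ℝ w) q (v - p) (v - p)|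
        ≤ hx ^ 2 * M20 + 2 * hx * hy * M11 + hy ^ 2 * M02 := fun q hq v hv =>
    abs_apply_apply_self_le _ (hw.contDiffAt.isSymmSndFDerivAt (by simp) _ _)
      (pdx_pdx_eq hw1 (hw2 q) ▸ h20 q hq) (pdy_pdx_eq hw1 (hw2 q) ▸ h11 q hq)
      (pdy_pdy_eq hw1 (hw2 q) ▸ h02 q hq)
      (abs_fst_sub_le_of_mem_tri hhx hhy hp hv) (abs_snd_sub_le_of_mem_tri hhx hhy hp hv)
  have herr := abs_sub_interp_le hhx hhy hp (fderiv ℝ w p) fun v hv => by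
    simpa only [Real.norm_eq_abs] using norm_sub_sub_fderiv_le hw1 hw2 (convex_tri xi yj hx hy)
      hp hv fun q hq => by simpa only [Real.norm_eq_abs] using hHess q hq v hv
  have hM20 : 0 ≤ M20 := (abs_nonneg _).trans (h20 p hp)
  have hM02 : 0 ≤ M02 := (abs_nonneg _).trans (h02 p hp)
  linarith [mul_nonneg (sq_nonneg hx) hM20, mul_nonneg (sq_nonneg hy) hM02]
end
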